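/- Let m(r) := √2·r − (3/(2√2))·log r. There exist a constant ρ > 0 and r₀ ≥ 2 such that for all r ≥ r₀ and all X > 1, e^{r} ∫_{−1}^{0} (1/√(2πr)) · e^{−(X + m(r) − y)²/(2r)} · (1 − e^{−2(y+1)X/r}) dy ≤ ρ · X · exp(−√2·X − X²/(2r) + (3/(2√2))·X·(log r)/r). -/

import Mathlib

open MeasureTheory Real Set

/-!
Bound `1 − e^{−u} ≤ u` and drop the shift `−y ≥ 0` from the Gaussian exponent (the front is
nonnegative). Expanding the square, `m(r)²/(2r) = r − (3/2) log r + (9/16) (log r)²/r`: the `e^r`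
cancels, the factor `r^{3/2}` left over cancels against `r^{-1/2}` from the density and `r^{-1}`
from `2X/r`, and the cross term `X m(r)/r` is exactly the correction in the exponent. So the integrand
is at most `(2/√(2π)) X exp(…) ≤ X exp(…)` on an interval of length one.
-/

noncomputable def bbmFront (r : ℝ) : ℝ :=
  Real.sqrt 2 * r - 3 / (2 * Real.sqrt 2) * Real.log r

lemma bbmFront_nonneg {r : ℝ} (hr : 1 ≤ r) : 0 ≤ bbmFront r := by
  have hs : Real.sqrt 2 ^ 2 = 2 := Real.sq_sqrt zero_le_two
  have hs0 : 0 < Real.sqrt 2 := by positivity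
  have hlog : Real.log r ≤ r := (Real.log_le_sub_one_of_pos (by linarith)).trans (by linarith)
  have hlog0 : 0 ≤ Real.log r := Real.log_nonneg hr
  rw [bbmFront, div_mul_eq_mul_div, sub_nonneg, div_le_iff₀ (by positivity)]
  nlinarith

lemma sub_sq_add_bbmFront_div_le {r : ℝ} (hr : 0 < r) (X : ℝ) :
    r - (X + bbmFront r) ^ 2 / (2 * r) ≤ 3 / 2 * Real.log r +
      (-Real.sqrt 2 * X - X ^ 2 / (2 * r) + 3 / (2 * Real.sqrt 2) * X * Real.log r / r) := by
  have hs : Real.sqrt 2 ^ 2 = 2 := Real.sq_sqrt zero_le_two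
  have hs0 : Real.sqrt 2 ≠ 0 := by positivity
  have key : r - (X + bbmFront r) ^ 2 / (2 * r) =
      3 / 2 * Real.log r - 9 / 16 * Real.log r ^ 2 / r +
      (-Real.sqrt 2 * X - X ^ 2 / (2 * r) + 3 / (2 * Real.sqrt 2) * X * Real.log r / r) := by
    rw [bbmFront]
    field_simp
    linear_combination (72 * Real.log r ^ 2 - 64 * r ^ 2 * Real.sqrt 2 ^ 2) * hs
  rw [key]
  have : 0 ≤ 9 / 16 * Real.log r ^ 2 / r := by positivity
  linarith

lemma exp_three_halves_mul_log {r : ℝ} (hr : 0 < r) :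
    Real.exp (3 / 2 * Real.log r) = r * Real.sqrt r := by
  rw [show 3 / 2 * Real.log r = Real.log r + Real.log r * (1 / 2) by ring, Real.exp_add,
    Real.exp_log hr, Real.sqrt_eq_rpow, Real.rpow_def_of_pos hr]

lemma exp_mul_exp_neg_sq_add_bbmFront_le {r : ℝ} (hr : 0 < r) (X : ℝ) :
    Real.exp r * Real.exp (-(X + bbmFront r) ^ 2 / (2 * r)) ≤ r * Real.sqrt r *
      Real.exp (-Real.sqrt 2 * X - X ^ 2 / (2 * r) + 3 / (2 * Real.sqrt 2) * X * Real.log r / r) := by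
  rw [← exp_three_halves_mul_log hr, ← Real.exp_add, ← Real.exp_add, Real.exp_le_exp, neg_div,
    ← sub_eq_add_neg]
  exact sub_sq_add_bbmFront_div_le hr X

lemma exp_mul_gaussian_mul_one_sub_exp_le {r X y : ℝ} (hr : 1 ≤ r) (hX : 0 ≤ X)
    (hy : y ∈ Icc (-1 : ℝ) 0) :
    Real.exp r * ((1 / Real.sqrt (2 * Real.pi * r)) *
        Real.exp (-(X + bbmFront r - y) ^ 2 / (2 * r)) * (1 - Real.exp (-2 * (y + 1) * X / r)))
      ≤ X * Real.exp (-Real.sqrt 2 * X - X ^ 2 / (2 * r) +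
          3 / (2 * Real.sqrt 2) * X * Real.log r / r) := by
  obtain ⟨hy₁, hy₀⟩ := hy
  have hr₀ : 0 < r := by linarith
  set E := Real.exp (-Real.sqrt 2 * X - X ^ 2 / (2 * r) +
    3 / (2 * Real.sqrt 2) * X * Real.log r / r)
  have hshift : Real.exp (-(X + bbmFront r - y) ^ 2 / (2 * r)) ≤
      Real.exp (-(X + bbmFront r) ^ 2 / (2 * r)) := by
    have := bbmFront_nonneg hr
    gcongr
    nlinarith
  have hdefect₀ : 0 ≤ 1 - Real.exp (-2 * (y + 1) * X / r) :=
    sub_nonneg.mpr (Real.exp_le_one_iff.mpr (div_nonpos_of_nonpos_of_nonneg (by nlinarith) hr₀.le))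
  have hdefect : 1 - Real.exp (-2 * (y + 1) * X / r) ≤ 2 * X / r := by
    calc 1 - Real.exp (-2 * (y + 1) * X / r) = 1 - Real.exp (-(2 * (y + 1) * X / r)) := by ring_nf
      _ ≤ 2 * (y + 1) * X / r := by linarith [Real.add_one_le_exp (-(2 * (y + 1) * X / r))]
      _ ≤ 2 * X / r := by gcongr; nlinarith
  have hconst : 2 / Real.sqrt (2 * Real.pi) ≤ 1 := by
    rw [div_le_one (by positivity)]
    exact Real.le_sqrt_of_sq_le (by nlinarith [Real.pi_gt_three])
  calc _ = 1 / Real.sqrt (2 * Real.pi * r) *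
          (Real.exp r * Real.exp (-(X + bbmFront r - y) ^ 2 / (2 * r))) *
            (1 - Real.exp (-2 * (y + 1) * X / r)) := by ring
    _ ≤ 1 / Real.sqrt (2 * Real.pi * r) * (r * Real.sqrt r * E) * (2 * X / r) := by
        gcongr 1 / _ * ?_ * ?_
        exact (mul_le_mul_of_nonneg_left hshift (Real.exp_nonneg r)).trans
          (exp_mul_exp_neg_sq_add_bbmFront_le hr₀ X)
    _ = 2 / Real.sqrt (2 * Real.pi) * (X * E) := by
        rw [Real.sqrt_mul (by positivity)]
        field_simp
    _ ≤ X * E := mul_le_of_le_one_left (by positivity) hconst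

theorem stmt_2 :
    ∃ ρ > (0 : ℝ), ∃ r₀ ≥ (2 : ℝ), ∀ r ≥ r₀, ∀ X > (1 : ℝ),
      Real.exp r *
        ∫ y in (-1 : ℝ)..0,
          (1 / Real.sqrt (2 * Real.pi * r)) *
            Real.exp (-(X + bbmFront r - y) ^ 2 / (2 * r)) *
              (1 - Real.exp (-2 * (y + 1) * X / r))
      ≤ ρ * X * Real.exp (-Real.sqrt 2 * X - X ^ 2 / (2 * r) +
          3 / (2 * Real.sqrt 2) * X * Real.log r / r) := by
  refine ⟨1, one_pos, 2, le_rfl, fun r hr X hX => ?_⟩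
  rw [← intervalIntegral.integral_const_mul, one_mul]
  calc _ ≤ ∫ _ in (-1 : ℝ)..0, X * Real.exp (-Real.sqrt 2 * X - X ^ 2 / (2 * r) +
          3 / (2 * Real.sqrt 2) * X * Real.log r / r) := by
        refine intervalIntegral.integral_mono_on (by norm_num)
          (Continuous.intervalIntegrable (by fun_prop) _ _) intervalIntegrable_const
          fun y hy => exp_mul_gaussian_mul_one_sub_exp_le (by linarith) (by linarith) hy
    _ = _ := by simp
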